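/- Let A and A_k (k ∈ ℕ) be matrix-valued functions in (C^(s-1))^{m×m}, and let Y, Y_k ∈ (C^(s))^{m×m} be the corresponding fundamental matrices, i.e. the unique solutions of Y' + A·Y = 0 on [a,b], Y(a) = I_m, and Y_k' + A_k·Y_k = 0 on [a,b], Y_k(a) = I_m. If ‖A_k − A‖_(s-1) → 0 as k → ∞, then ‖Y_k − Y‖_(s) → 0 as k → ∞. -/

import Mathlib

open Set Filter Topology

noncomputable section

/-- The norm `‖x‖_(l)` of a scalar function in `C^(l)` on `[a,b]`:
the sum over `j = 0, …, l` of the sup over `[a,b]` of `|x^(j)|`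
(derivatives are taken within `[a,b]`, i.e. one-sided at the endpoints). -/
def clNorm (l : ℕ) (a b : ℝ) (x : ℝ → ℂ) : ℝ :=
  ∑ j ∈ Finset.range (l + 1),
    ⨆ t : Set.Icc a b, ‖iteratedDerivWithin j x (Set.Icc a b) (t : ℝ)‖

/-- The norm of a `ℂ^m`-valued function in `(C^(l))^m`: the sum of the norms of its components. -/
def vecClNorm {m : ℕ} (l : ℕ) (a b : ℝ) (y : ℝ → Fin m → ℂ) : ℝ :=
  ∑ i, clNorm l a b fun t => y t i

/-- The norm of an `m×m`-matrix-valued function in `(C^(l))^{m×m}`: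
the maximum of the norms of its columns. -/
def matClNorm {m : ℕ} (l : ℕ) (a b : ℝ) (A : ℝ → Matrix (Fin m) (Fin m) ℂ) : ℝ :=
  ⨆ j : Fin m, vecClNorm l a b fun t i => A t i j

/-- Membership in `(C^(l))^m`: every component is `l` times continuously differentiable
on `[a,b]` (one-sided derivatives at the endpoints). -/
def VecCl {m : ℕ} (l : ℕ) (a b : ℝ) (y : ℝ → Fin m → ℂ) : Prop :=
  ∀ i, ContDiffOn ℝ l (fun t => y t i) (Set.Icc a b)

/-- Membership in `(C^(l))^{m×m}`. -/
def MatCl {m : ℕ} (l : ℕ) (a b : ℝ) (A : ℝ → Matrix (Fin m) (Fin m) ℂ) : Prop :=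
  ∀ i j, ContDiffOn ℝ l (fun t => A t i j) (Set.Icc a b)

/-- The differential expression `(Ly)(t) := y'(t) + A(t)·y(t)`, componentwise,
with the derivative taken within `[a,b]`. -/
def Lop {m : ℕ} (a b : ℝ) (A : ℝ → Matrix (Fin m) (Fin m) ℂ)
    (y : ℝ → Fin m → ℂ) : ℝ → Fin m → ℂ :=
  fun t i => derivWithin (fun u => y u i) (Set.Icc a b) t + (A t).mulVec (y t) i

/-- Continuity (boundedness) of a linear map `B : (C^(s))^m → ℂ^r`:
`‖By‖ ≤ K₀·‖y‖_(s)` for all `y ∈ (C^(s))^m`, where the norm on `ℂ^r` is the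
sum of the absolute values of the components. -/
def IsBddOp {m r : ℕ} (s : ℕ) (a b : ℝ)
    (B : (↥(Set.Icc a b) → Fin m → ℂ) →ₗ[ℂ] (Fin r → ℂ)) : Prop :=
  ∃ K₀ > 0, ∀ y : ℝ → Fin m → ℂ, VecCl s a b y →
    ∑ i, ‖B ((Set.Icc a b).restrict y) i‖ ≤ K₀ * vecClNorm s a b y

/-- `Y` is the fundamental matrix of `A`: `Y ∈ (C^(s))^{m×m}`,
`Y'(t) + A(t)·Y(t) = 0` on `[a,b]` (componentwise), and `Y(a) = I_m`. -/
def IsFundMatrix {m : ℕ} (s : ℕ) (a b : ℝ) (A Y : ℝ → Matrix (Fin m) (Fin m) ℂ) : Prop :=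
  MatCl s a b Y ∧
  (∀ t ∈ Set.Icc a b, ∀ i j,
    derivWithin (fun u => Y u i j) (Set.Icc a b) t + (A t * Y t) i j = 0) ∧
  Y a = 1

/-- `M` is the characteristic matrix `M(L,B)`: its `j`-th column is `B` applied to
the `j`-th column of the fundamental matrix `Y`. -/
def IsCharMatrix {m r : ℕ} (a b : ℝ)
    (B : (↥(Set.Icc a b) → Fin m → ℂ) →ₗ[ℂ] (Fin r → ℂ))
    (Y : ℝ → Matrix (Fin m) (Fin m) ℂ) (M : Matrix (Fin r) (Fin m) ℂ) : Prop :=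
  ∀ j, (fun i => M i j) = B ((Set.Icc a b).restrict fun t k => Y t k j)

namespace FMCaux

/-- sup over `[a,b]` of the norm of the `j`-th derivative within `[a,b]`. -/
noncomputable def sD (a b : ℝ) (j : ℕ) (x : ℝ → ℂ) : ℝ :=
  ⨆ t : Set.Icc a b, ‖iteratedDerivWithin j x (Set.Icc a b) (t : ℝ)‖

variable {a b : ℝ}

lemma iccNe (hab : a < b) : Nonempty ↥(Set.Icc a b) :=
  ⟨⟨a, by simp [hab.le]⟩⟩

lemma sD_nonneg (a b : ℝ) (j : ℕ) (x : ℝ → ℂ) : 0 ≤ sD a b j x :=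
  Real.iSup_nonneg fun _ => norm_nonneg _

lemma sD_le (hab : a < b) {j : ℕ} {x : ℝ → ℂ} {c : ℝ}
    (h : ∀ t ∈ Set.Icc a b, ‖iteratedDerivWithin j x (Set.Icc a b) t‖ ≤ c) :
    sD a b j x ≤ c := by
  haveI := iccNe hab
  exact ciSup_le fun t => h t t.2

lemma bddD (hab : a < b) {n : ℕ} {x : ℝ → ℂ} (hx : ContDiffOn ℝ n x (Set.Icc a b))
    {j : ℕ} (hj : j ≤ n) :
    BddAbove (Set.range fun t : Set.Icc a b => ‖iteratedDerivWithin j x (Set.Icc a b) (t : ℝ)‖) := by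
  obtain ⟨C, hC⟩ := isCompact_Icc.exists_bound_of_continuousOn
    (hx.continuousOn_iteratedDerivWithin (by exact_mod_cast hj) (uniqueDiffOn_Icc hab))
  refine ⟨C, ?_⟩
  rintro _ ⟨t, rfl⟩
  exact hC t t.2

lemma le_sD (hab : a < b) {n : ℕ} {x : ℝ → ℂ} (hx : ContDiffOn ℝ n x (Set.Icc a b))
    {j : ℕ} (hj : j ≤ n) {t : ℝ} (ht : t ∈ Set.Icc a b) :
    ‖iteratedDerivWithin j x (Set.Icc a b) t‖ ≤ sD a b j x :=
  le_ciSup (bddD hab hx hj) (⟨t, ht⟩ : Set.Icc a b)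

lemma le_sD_zero (hab : a < b) {n : ℕ} {x : ℝ → ℂ} (hx : ContDiffOn ℝ n x (Set.Icc a b))
    {t : ℝ} (ht : t ∈ Set.Icc a b) : ‖x t‖ ≤ sD a b 0 x := by
  have := le_sD hab hx (Nat.zero_le n) ht
  rwa [iteratedDerivWithin_zero] at this

lemma sD_neg (hab : a < b) {j : ℕ} (x : ℝ → ℂ) :
    sD a b j (fun t => -x t) = sD a b j x := by
  refine iSup_congr fun t => ?_
  rw [iteratedDerivWithin_fun_neg x, norm_neg]

lemma sD_add_le (hab : a < b) {n : ℕ} {u v : ℝ → ℂ}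
    (hu : ContDiffOn ℝ n u (Set.Icc a b)) (hv : ContDiffOn ℝ n v (Set.Icc a b))
    {j : ℕ} (hj : j ≤ n) :
    sD a b j (fun t => u t + v t) ≤ sD a b j u + sD a b j v := by
  refine sD_le hab fun t ht => ?_
  have h1 : ContDiffOn ℝ j u (Set.Icc a b) := hu.of_le (by exact_mod_cast hj)
  have h2 : ContDiffOn ℝ j v (Set.Icc a b) := hv.of_le (by exact_mod_cast hj)
  have : iteratedDerivWithin j (fun t => u t + v t) (Set.Icc a b) t
      = iteratedDerivWithin j u (Set.Icc a b) t + iteratedDerivWithin j v (Set.Icc a b) t := by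
    exact iteratedDerivWithin_add ht (uniqueDiffOn_Icc hab) (h1 t ht) (h2 t ht)
  rw [this]
  exact (norm_add_le _ _).trans
    (add_le_add (le_sD hab hu hj ht) (le_sD hab hv hj ht))

lemma sD_mul_le (hab : a < b) {n : ℕ} {u v : ℝ → ℂ}
    (hu : ContDiffOn ℝ n u (Set.Icc a b)) (hv : ContDiffOn ℝ n v (Set.Icc a b))
    {j : ℕ} (hj : j ≤ n) :
    sD a b j (fun t => u t * v t) ≤
      ∑ q ∈ Finset.range (j + 1), (j.choose q : ℝ) * sD a b q u * sD a b (j - q) v := by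
  refine sD_le hab fun t ht => ?_
  have H := norm_iteratedFDerivWithin_mul_le (𝕜 := ℝ) hu hv (uniqueDiffOn_Icc hab) ht
    (by exact_mod_cast hj : (j : WithTop ℕ∞) ≤ n)
  simp only [norm_iteratedFDerivWithin_eq_norm_iteratedDerivWithin] at H
  refine H.trans (Finset.sum_le_sum fun q hq => ?_)
  have hqj : q ≤ j := Finset.mem_range_succ_iff.1 hq
  have h1 := le_sD hab hu (hqj.trans hj) ht
  have h2 := le_sD hab hv ((j.sub_le q).trans hj) ht
  have c0 : (0:ℝ) ≤ (j.choose q : ℝ) := by positivity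
  calc (j.choose q : ℝ) * ‖iteratedDerivWithin q u (Set.Icc a b) t‖ *
        ‖iteratedDerivWithin (j - q) v (Set.Icc a b) t‖
      ≤ (j.choose q : ℝ) * sD a b q u * ‖iteratedDerivWithin (j - q) v (Set.Icc a b) t‖ := by
        gcongr
    _ ≤ (j.choose q : ℝ) * sD a b q u * sD a b (j - q) v := by
        have : (0:ℝ) ≤ (j.choose q : ℝ) * sD a b q u :=
          mul_nonneg c0 (sD_nonneg a b q u)
        exact mul_le_mul_of_nonneg_left h2 this

lemma iterSum (hab : a < b) {n j : ℕ} (hj : j ≤ n) {ι : Type*} (u : Finset ι)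
    (h : ι → ℝ → ℂ) (hh : ∀ p ∈ u, ContDiffOn ℝ n (h p) (Set.Icc a b))
    {t : ℝ} (ht : t ∈ Set.Icc a b) :
    iteratedDerivWithin j (fun r => ∑ p ∈ u, h p r) (Set.Icc a b) t
      = ∑ p ∈ u, iteratedDerivWithin j (h p) (Set.Icc a b) t := by
  classical
  induction u using Finset.induction with
  | empty =>
    simp only [Finset.sum_empty]
    have hz := iteratedDerivWithin_fun_neg (𝕜 := ℝ) (F := ℂ) (n := j) (s := Set.Icc a b) (x := t)
      (fun _ => (0:ℂ))
    simp only [neg_zero] at hz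
    have h2 : iteratedDerivWithin j (fun _ => (0:ℂ)) (Set.Icc a b) t
        + iteratedDerivWithin j (fun _ => (0:ℂ)) (Set.Icc a b) t = 0 := by
      nth_rewrite 2 [hz]
      exact add_neg_cancel _
    exact add_self_eq_zero.mp h2
  | @insert p u hp IH =>
    have hsum : ContDiffOn ℝ n (fun r => ∑ q ∈ u, h q r) (Set.Icc a b) :=
      ContDiffOn.sum fun q hq => hh q (Finset.mem_insert_of_mem hq)
    have hcongr : iteratedDerivWithin j (fun r => ∑ q ∈ insert p u, h q r) (Set.Icc a b) t
        = iteratedDerivWithin j (h p + fun r => ∑ q ∈ u, h q r) (Set.Icc a b) t := by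
      refine iteratedDerivWithin_congr (fun r _ => ?_) ht
      simp [Finset.sum_insert hp]
    rw [hcongr, iteratedDerivWithin_add ht (uniqueDiffOn_Icc hab)
      ((hh p (Finset.mem_insert_self p u)).of_le (by exact_mod_cast hj : ((j:ℕ) : WithTop ℕ∞) ≤ (n : WithTop ℕ∞)) t ht)
      (hsum.of_le (by exact_mod_cast hj : ((j:ℕ) : WithTop ℕ∞) ≤ (n : WithTop ℕ∞)) t ht),
      IH (fun q hq => hh q (Finset.mem_insert_of_mem hq)), Finset.sum_insert hp]

end FMCaux

lemma clNorm_eq_sum (l : ℕ) (a b : ℝ) (x : ℝ → ℂ) :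
    clNorm l a b x = ∑ j ∈ Finset.range (l + 1), FMCaux.sD a b j x := rfl

lemma clNorm_nonneg (l : ℕ) (a b : ℝ) (x : ℝ → ℂ) : 0 ≤ clNorm l a b x := by
  rw [clNorm_eq_sum]
  exact Finset.sum_nonneg fun j _ => FMCaux.sD_nonneg a b j x

lemma vecClNorm_nonneg {m : ℕ} (l : ℕ) (a b : ℝ) (y : ℝ → Fin m → ℂ) :
    0 ≤ vecClNorm l a b y :=
  Finset.sum_nonneg fun i _ => clNorm_nonneg l a b _

lemma matClNorm_nonneg {m : ℕ} (l : ℕ) (a b : ℝ) (A : ℝ → Matrix (Fin m) (Fin m) ℂ) :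
    0 ≤ matClNorm l a b A :=
  Real.iSup_nonneg fun j => vecClNorm_nonneg l a b _

set_option maxHeartbeats 2000000 in
/-- If `‖A_k − A‖_(s-1) → 0`, then the fundamental matrices converge:
`‖Y_k − Y‖_(s) → 0`. -/
theorem fundamental_matrices_converge
    (a b : ℝ) (hab : a < b) (m s : ℕ) (hm : 1 ≤ m) (hs : 1 ≤ s)
    (A : ℝ → Matrix (Fin m) (Fin m) ℂ) (hA : MatCl (s - 1) a b A)
    (Ak : ℕ → ℝ → Matrix (Fin m) (Fin m) ℂ) (hAk : ∀ k, MatCl (s - 1) a b (Ak k))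
    (Y : ℝ → Matrix (Fin m) (Fin m) ℂ) (hY : IsFundMatrix s a b A Y)
    (Yk : ℕ → ℝ → Matrix (Fin m) (Fin m) ℂ) (hYk : ∀ k, IsFundMatrix s a b (Ak k) (Yk k))
    (hconv : Tendsto (fun k => matClNorm (s - 1) a b fun t => Ak k t - A t) atTop (𝓝 0)) :
    Tendsto (fun k => matClNorm s a b fun t => Yk k t - Y t) atTop (𝓝 0) := by
  classical
  have hS : UniqueDiffOn ℝ (Set.Icc a b) := uniqueDiffOn_Icc hab
  haveI : Nonempty (Fin m) := ⟨⟨0, hm⟩⟩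
  haveI : Nonempty ↥(Set.Icc a b) := FMCaux.iccNe hab
  have hs1 : (1 : WithTop ℕ∞) ≤ (s : ℕ) := by exact_mod_cast hs
  -- abbreviation for the C^{s-1} norm of A_k − A
  set eps : ℕ → ℝ := fun k => matClNorm (s - 1) a b fun t => Ak k t - A t with heps
  have heps0 : ∀ k, 0 ≤ eps k := fun k => matClNorm_nonneg _ _ _ _
  obtain ⟨C, hC⟩ : ∃ C, ∀ k, eps k ≤ C := by
    obtain ⟨C, hC⟩ := hconv.bddAbove_range
    exact ⟨C, fun k => hC ⟨k, rfl⟩⟩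
  have hC0 : 0 ≤ C := le_trans (heps0 0) (hC 0)
  -- componentwise smoothness
  have hZe : ∀ k i l, ContDiffOn ℝ s (fun t => Yk k t i l - Y t i l) (Set.Icc a b) :=
    fun k i l => ((hYk k).1 i l).sub (hY.1 i l)
  have hdAe : ∀ k i p, ContDiffOn ℝ (s - 1) (fun t => Ak k t i p - A t i p) (Set.Icc a b) :=
    fun k i p => ((hAk k) i p).sub (hA i p)
  -- entrywise bound by the matrix norm
  have hEnt : ∀ k (j : ℕ), j ≤ s - 1 → ∀ i p,
      FMCaux.sD a b j (fun t => Ak k t i p - A t i p) ≤ eps k := by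
    intro k j hj i p
    have h1 : FMCaux.sD a b j (fun t => Ak k t i p - A t i p)
        ≤ clNorm (s - 1) a b (fun t => Ak k t i p - A t i p) := by
      rw [clNorm_eq_sum]
      exact Finset.single_le_sum (fun q _ => FMCaux.sD_nonneg a b q _)
        (Finset.mem_range_succ_iff.2 hj)
    have hcomp : (fun t => (Ak k t - A t) i p) = (fun t => Ak k t i p - A t i p) := rfl
    have h2 : clNorm (s - 1) a b (fun t => Ak k t i p - A t i p)
        ≤ vecClNorm (s - 1) a b (fun t i' => (Ak k t - A t) i' p) := by
      rw [← hcomp] at *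
      exact Finset.single_le_sum (f := fun i' => clNorm (s - 1) a b fun t => (Ak k t - A t) i' p)
        (fun i' _ => clNorm_nonneg _ _ _ _) (Finset.mem_univ i)
    have h3 : vecClNorm (s - 1) a b (fun t i' => (Ak k t - A t) i' p) ≤ eps k :=
      le_ciSup (f := fun p' : Fin m => vecClNorm (s - 1) a b fun t i' => (Ak k t - A t) i' p')
        (Set.Finite.bddAbove (Set.finite_range _)) p
    exact (h1.trans h2).trans h3
  -- uniform entry bound for A_k
  have hAkEnt : ∀ k (j : ℕ), j ≤ s - 1 → ∀ i p,
      FMCaux.sD a b j (fun t => Ak k t i p)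
        ≤ FMCaux.sD a b j (fun t => A t i p) + eps k := by
    intro k j hj i p
    have heq : (fun t => Ak k t i p) = (fun t => A t i p + (Ak k t i p - A t i p)) := by
      funext t; ring
    rw [heq]
    exact (FMCaux.sD_add_le hab (hA i p) (hdAe k i p) hj).trans
      (add_le_add le_rfl (hEnt k j hj i p))
  -- derivatives from the ODE
  have hYd : ∀ t ∈ Set.Icc a b, ∀ i l,
      HasDerivWithinAt (fun u => Y u i l) (-((A t * Y t) i l)) (Set.Icc a b) t := by
    intro t ht i l
    have hd := ((hY.1 i l).differentiableOn (lt_of_lt_of_le zero_lt_one hs1).ne' t ht).hasDerivWithinAt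
    rwa [eq_neg_of_add_eq_zero_left (hY.2.1 t ht i l)] at hd
  have hYkd : ∀ k, ∀ t ∈ Set.Icc a b, ∀ i l,
      HasDerivWithinAt (fun u => Yk k u i l) (-((Ak k t * Yk k t) i l)) (Set.Icc a b) t := by
    intro k t ht i l
    have hd := (((hYk k).1 i l).differentiableOn (lt_of_lt_of_le zero_lt_one hs1).ne' t ht).hasDerivWithinAt
    rwa [eq_neg_of_add_eq_zero_left ((hYk k).2.1 t ht i l)] at hd
  -- MAIN INDUCTION
  have main : ∀ j : ℕ, j ≤ s → ∀ i l,
      Tendsto (fun k => FMCaux.sD a b j (fun t => Yk k t i l - Y t i l)) atTop (𝓝 0) := by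
    intro j
    induction j using Nat.strong_induction_on with
    | _ j IH =>
    intro hj i l
    match j, hj, IH with
    | 0, hj, IH =>
      -- base case: Gronwall inequality
      set CA : ℝ := ∑ i' : Fin m, ∑ p : Fin m, FMCaux.sD a b 0 (fun t => A t i' p) with hCA
      set CY : ℝ := ∑ p : Fin m, ∑ l' : Fin m, FMCaux.sD a b 0 (fun t => Y t p l') with hCYdef
      have hCA0 : 0 ≤ CA := Finset.sum_nonneg fun _ _ => Finset.sum_nonneg fun _ _ => FMCaux.sD_nonneg _ _ _ _
      have hCY0 : 0 ≤ CY := Finset.sum_nonneg fun _ _ => Finset.sum_nonneg fun _ _ => FMCaux.sD_nonneg _ _ _ _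
      have hCAe : ∀ i' p, FMCaux.sD a b 0 (fun t => A t i' p) ≤ CA := by
        intro i' p
        refine le_trans (Finset.single_le_sum (f := fun p' => FMCaux.sD a b 0 fun t => A t i' p')
          (fun _ _ => FMCaux.sD_nonneg _ _ _ _) (Finset.mem_univ p)) ?_
        exact Finset.single_le_sum (f := fun i'' => ∑ p' : Fin m, FMCaux.sD a b 0 fun t => A t i'' p')
          (fun _ _ => Finset.sum_nonneg fun _ _ => FMCaux.sD_nonneg _ _ _ _) (Finset.mem_univ i')
      have hCYe : ∀ p l', FMCaux.sD a b 0 (fun t => Y t p l') ≤ CY := by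
        intro p l'
        refine le_trans (Finset.single_le_sum (f := fun l'' => FMCaux.sD a b 0 fun t => Y t p l'')
          (fun _ _ => FMCaux.sD_nonneg _ _ _ _) (Finset.mem_univ l')) ?_
        exact Finset.single_le_sum (f := fun p' => ∑ l'' : Fin m, FMCaux.sD a b 0 fun t => Y t p' l'')
          (fun _ _ => Finset.sum_nonneg fun _ _ => FMCaux.sD_nonneg _ _ _ _) (Finset.mem_univ p)
      set K : ℝ := m * (CA + C) + 1 with hK
      have hKpos : 0 < K := by rw [hK]; positivity
      set C2 : ℝ := (Real.exp (K * (b - a)) - 1) / K with hC2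
      have hC20 : 0 ≤ C2 := by
        apply div_nonneg _ hKpos.le
        have hx : (0:ℝ) ≤ K * (b - a) := mul_nonneg hKpos.le (by linarith)
        linarith [Real.add_one_le_exp (K * (b - a))]
      set φ : ℕ → ℝ → Fin m → ℂ := fun k t i' => Yk k t i' l - Y t i' l with hφdef
      have hgron : ∀ k, ∀ t ∈ Set.Icc a b, ‖φ k t‖ ≤ gronwallBound 0 K ((m:ℝ) * eps k * CY) (t - a) := by
        intro k
        refine norm_le_gronwallBound_of_norm_deriv_right_le
          (f := φ k) (f' := fun t => fun i' => (A t * Y t) i' l - (Ak k t * Yk k t) i' l)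
          ?_ ?_ ?_ ?_
        · exact continuousOn_pi.2 fun i' => (hZe k i' l).continuousOn
        · intro t ht
          have htI : t ∈ Set.Icc a b := ⟨ht.1, ht.2.le⟩
          have hmem : Set.Icc a b ∈ 𝓝[Set.Ici t] t := by
            refine mem_nhdsWithin.2 ⟨Set.Iio b, isOpen_Iio, ht.2, ?_⟩
            rintro x ⟨hx1, hx2⟩
            exact ⟨le_trans ht.1 hx2, le_of_lt hx1⟩
          refine HasDerivWithinAt.mono_of_mem_nhdsWithin ?_ hmem
          refine hasDerivWithinAt_pi.2 fun i' => ?_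
          show HasDerivWithinAt (fun u => Yk k u i' l - Y u i' l)
            ((A t * Y t) i' l - (Ak k t * Yk k t) i' l) (Set.Icc a b) t
          have h3 := (hYkd k t htI i' l).fun_sub (hYd t htI i' l)
          exact h3.congr_deriv (by ring)
        · have hza : φ k a = 0 := by
            funext i'
            simp [hφdef, (hYk k).2.2, hY.2.2]
          rw [hza]
          simp
        · intro t ht
          have htI : t ∈ Set.Icc a b := ⟨ht.1, ht.2.le⟩
          have hnn : (0:ℝ) ≤ K * ‖φ k t‖ + (m:ℝ) * eps k * CY := by
            have h1 := heps0 k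
            have h2 := norm_nonneg (φ k t)
            positivity
          show ‖(fun i' => (A t * Y t) i' l - (Ak k t * Yk k t) i' l : Fin m → ℂ)‖
            ≤ K * ‖φ k t‖ + (m:ℝ) * eps k * CY
          rw [pi_norm_le_iff_of_nonneg hnn]
          intro i'
          show ‖(A t * Y t) i' l - (Ak k t * Yk k t) i' l‖ ≤ _
          have hgi : (A t * Y t) i' l - (Ak k t * Yk k t) i' l
              = ∑ p : Fin m, ((A t i' p - Ak k t i' p) * Y t p l
                - Ak k t i' p * (Yk k t p l - Y t p l)) := by
            rw [Matrix.mul_apply, Matrix.mul_apply, ← Finset.sum_sub_distrib]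
            exact Finset.sum_congr rfl fun p _ => by ring
          rw [hgi]
          refine (norm_sum_le _ _).trans ?_
          have hterm : ∀ p : Fin m, ‖(A t i' p - Ak k t i' p) * Y t p l
              - Ak k t i' p * (Yk k t p l - Y t p l)‖
              ≤ eps k * CY + (CA + C) * ‖φ k t‖ := by
            intro p
            refine (norm_sub_le _ _).trans ?_
            rw [norm_mul, norm_mul]
            refine add_le_add ?_ ?_
            · have h1 : ‖A t i' p - Ak k t i' p‖ ≤ eps k := by
                have hb0 := FMCaux.le_sD_zero hab ((hA i' p).sub ((hAk k) i' p)) htI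
                have hneg : (fun t => A t i' p - Ak k t i' p)
                    = (fun t => -(Ak k t i' p - A t i' p)) := by funext r; ring
                calc ‖A t i' p - Ak k t i' p‖
                    ≤ FMCaux.sD a b 0 (fun t => A t i' p - Ak k t i' p) := hb0
                  _ = FMCaux.sD a b 0 (fun t => Ak k t i' p - A t i' p) := by
                      rw [hneg, FMCaux.sD_neg hab]
                  _ ≤ eps k := hEnt k 0 (Nat.zero_le _) i' p
              have h2 : ‖Y t p l‖ ≤ CY := (FMCaux.le_sD_zero hab (hY.1 p l) htI).trans (hCYe p l)
              exact mul_le_mul h1 h2 (norm_nonneg _) (heps0 k)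
            · have h1 : ‖Ak k t i' p‖ ≤ CA + C := by
                refine (FMCaux.le_sD_zero hab ((hAk k) i' p) htI).trans ?_
                exact (hAkEnt k 0 (Nat.zero_le _) i' p).trans (add_le_add (hCAe i' p) (hC k))
              have h2 : ‖Yk k t p l - Y t p l‖ ≤ ‖φ k t‖ := norm_le_pi_norm (φ k t) p
              exact mul_le_mul h1 h2 (norm_nonneg _) (by linarith)
          refine (Finset.sum_le_sum fun p _ => hterm p).trans ?_
          rw [Finset.sum_const, Finset.card_univ, Fintype.card_fin, nsmul_eq_mul, hK]
          have hφ0 := norm_nonneg (φ k t)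
          have h1 := heps0 k
          nlinarith
      have hb : ∀ k, FMCaux.sD a b 0 (fun t => Yk k t i l - Y t i l)
          ≤ ((m:ℝ) * eps k * CY) * C2 := by
        intro k
        refine FMCaux.sD_le hab fun t ht => ?_
        have h1 : ‖iteratedDerivWithin 0 (fun t => Yk k t i l - Y t i l) (Set.Icc a b) t‖
            = ‖Yk k t i l - Y t i l‖ := by rw [iteratedDerivWithin_zero]
        rw [h1]
        have h2 : ‖Yk k t i l - Y t i l‖ ≤ ‖φ k t‖ := norm_le_pi_norm (φ k t) i
        refine h2.trans ((hgron k t ht).trans ?_)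
        rw [gronwallBound_of_K_ne_0 hKpos.ne']
        simp only [zero_mul, zero_add]
        have hδ0 : 0 ≤ (m:ℝ) * eps k * CY := by
          have := heps0 k; positivity
        have hexp : Real.exp (K * (t - a)) ≤ Real.exp (K * (b - a)) := by
          apply Real.exp_le_exp.2
          have hba : t - a ≤ b - a := by linarith [ht.2]
          exact mul_le_mul_of_nonneg_left hba hKpos.le
        calc ((m:ℝ) * eps k * CY) / K * (Real.exp (K * (t - a)) - 1)
            ≤ ((m:ℝ) * eps k * CY) / K * (Real.exp (K * (b - a)) - 1) :=
              mul_le_mul_of_nonneg_left (by linarith) (div_nonneg hδ0 hKpos.le)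
          _ = ((m:ℝ) * eps k * CY) * C2 := by rw [hC2]; ring
      refine squeeze_zero (fun k => FMCaux.sD_nonneg _ _ _ _) hb ?_
      have hlim := ((hconv.const_mul (m:ℝ)).mul_const CY).mul_const C2
      simpa using hlim
    | (j+1), hj, IH =>
      have hjs1 : j ≤ s - 1 := by omega
      have hjs : j ≤ s := by omega
      have hc1 : ((j:ℕ) : WithTop ℕ∞) ≤ ((s - 1 : ℕ) : WithTop ℕ∞) := by exact_mod_cast hjs1
      have hc2 : ((j:ℕ) : WithTop ℕ∞) ≤ ((s : ℕ) : WithTop ℕ∞) := by exact_mod_cast hjs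
      have key : ∀ k, FMCaux.sD a b (j+1) (fun t => Yk k t i l - Y t i l) ≤
          ∑ p : Fin m,
            ((∑ q ∈ Finset.range (j + 1), (j.choose q : ℝ) * eps k
                * FMCaux.sD a b (j - q) (fun t => Y t p l))
             + (∑ q ∈ Finset.range (j + 1), (j.choose q : ℝ)
                * (FMCaux.sD a b q (fun t => A t i p) + eps k)
                * FMCaux.sD a b (j - q) (fun t => Yk k t p l - Y t p l))) := by
        intro k
        have hdAj : ∀ p, ContDiffOn ℝ j (fun t => A t i p - Ak k t i p) (Set.Icc a b) :=
          fun p => ((hA i p).sub ((hAk k) i p)).of_le hc1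
        have hAkj : ∀ p, ContDiffOn ℝ j (fun t => Ak k t i p) (Set.Icc a b) :=
          fun p => ((hAk k) i p).of_le hc1
        have hYj : ∀ p, ContDiffOn ℝ j (fun t => Y t p l) (Set.Icc a b) :=
          fun p => (hY.1 p l).of_le hc2
        have hZj : ∀ p, ContDiffOn ℝ j (fun t => Yk k t p l - Y t p l) (Set.Icc a b) :=
          fun p => (hZe k p l).of_le hc2
        have hterm : ∀ p : Fin m, ContDiffOn ℝ j
            (fun t => (A t i p - Ak k t i p) * Y t p l
              - Ak k t i p * (Yk k t p l - Y t p l)) (Set.Icc a b) :=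
          fun p => ((hdAj p).mul (hYj p)).sub ((hAkj p).mul (hZj p))
        have hDz : Set.EqOn (derivWithin (fun u => Yk k u i l - Y u i l) (Set.Icc a b))
            (fun t => ∑ p : Fin m, ((A t i p - Ak k t i p) * Y t p l
              - Ak k t i p * (Yk k t p l - Y t p l))) (Set.Icc a b) := by
          intro t ht
          have h3 := ((hYkd k t ht i l).fun_sub (hYd t ht i l)).derivWithin (hS t ht)
          rw [h3, Matrix.mul_apply, Matrix.mul_apply]
          have hns : ∀ X Z : ℂ, -X - -Z = Z - X := fun X Z => by ring
          rw [hns, ← Finset.sum_sub_distrib]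
          exact Finset.sum_congr rfl fun p _ => by ring
        refine FMCaux.sD_le hab fun t ht => ?_
        rw [iteratedDerivWithin_succ']
        rw [iteratedDerivWithin_congr hDz ht]
        rw [FMCaux.iterSum hab (le_refl j) Finset.univ _ (fun p _ => hterm p) ht]
        refine (norm_sum_le _ _).trans (Finset.sum_le_sum fun p _ => ?_)
        have hsub : iteratedDerivWithin j (fun t => (A t i p - Ak k t i p) * Y t p l
              - Ak k t i p * (Yk k t p l - Y t p l)) (Set.Icc a b) t
            = iteratedDerivWithin j (fun t => (A t i p - Ak k t i p) * Y t p l) (Set.Icc a b) t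
              - iteratedDerivWithin j (fun t => Ak k t i p * (Yk k t p l - Y t p l))
                  (Set.Icc a b) t :=
          iteratedDerivWithin_sub ht hS ((hdAj p).mul (hYj p) t ht) ((hAkj p).mul (hZj p) t ht)
        rw [hsub]
        refine (norm_sub_le _ _).trans (add_le_add ?_ ?_)
        · refine (FMCaux.le_sD hab ((hdAj p).mul (hYj p)) (le_refl j) ht).trans ?_
          refine (FMCaux.sD_mul_le hab (hdAj p) (hYj p) (le_refl j)).trans ?_
          refine Finset.sum_le_sum fun q hq => ?_
          have hq' : q ≤ j := Finset.mem_range_succ_iff.1 hq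
          have hεq : FMCaux.sD a b q (fun t => A t i p - Ak k t i p) ≤ eps k := by
            have hneg : (fun t => A t i p - Ak k t i p)
                = (fun t => -(Ak k t i p - A t i p)) := by funext r; ring
            rw [hneg, FMCaux.sD_neg hab]
            exact hEnt k q (hq'.trans hjs1) i p
          have c0 : (0:ℝ) ≤ (j.choose q : ℝ) := by positivity
          exact mul_le_mul_of_nonneg_right (mul_le_mul_of_nonneg_left hεq c0)
            (FMCaux.sD_nonneg _ _ _ _)
        · refine (FMCaux.le_sD hab ((hAkj p).mul (hZj p)) (le_refl j) ht).trans ?_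
          refine (FMCaux.sD_mul_le hab (hAkj p) (hZj p) (le_refl j)).trans ?_
          refine Finset.sum_le_sum fun q hq => ?_
          have hq' : q ≤ j := Finset.mem_range_succ_iff.1 hq
          have c0 : (0:ℝ) ≤ (j.choose q : ℝ) := by positivity
          exact mul_le_mul_of_nonneg_right
            (mul_le_mul_of_nonneg_left (hAkEnt k q (hq'.trans hjs1) i p) c0)
            (FMCaux.sD_nonneg _ _ _ _)
      have hbound : Tendsto (fun k => ∑ p : Fin m,
          ((∑ q ∈ Finset.range (j + 1), (j.choose q : ℝ) * eps k
              * FMCaux.sD a b (j - q) (fun t => Y t p l))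
           + (∑ q ∈ Finset.range (j + 1), (j.choose q : ℝ)
              * (FMCaux.sD a b q (fun t => A t i p) + eps k)
              * FMCaux.sD a b (j - q) (fun t => Yk k t p l - Y t p l)))) atTop (𝓝 0) := by
        have h0 : (0:ℝ) = ∑ _p : Fin m,
            ((∑ _q ∈ Finset.range (j+1), (0:ℝ)) + (∑ _q ∈ Finset.range (j+1), (0:ℝ))) := by simp
        rw [h0]
        refine tendsto_finset_sum _ fun p _ => Tendsto.add ?_ ?_
        · refine tendsto_finset_sum _ fun q _ => ?_
          have hlim := (hconv.const_mul (j.choose q : ℝ)).mul_const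
            (FMCaux.sD a b (j - q) (fun t => Y t p l))
          simpa using hlim
        · refine tendsto_finset_sum _ fun q hq => ?_
          have hq' : q ≤ j := Finset.mem_range_succ_iff.1 hq
          have hIH := IH (j - q) (by omega) (by omega) p l
          have h1 : Tendsto (fun k => (j.choose q : ℝ)
              * (FMCaux.sD a b q (fun t => A t i p) + eps k)) atTop
              (𝓝 ((j.choose q : ℝ) * (FMCaux.sD a b q (fun t => A t i p) + 0))) :=
            (tendsto_const_nhds.add hconv).const_mul _
          have hlim := h1.mul hIH
          simpa using hlim
      exact squeeze_zero (fun k => FMCaux.sD_nonneg _ _ _ _) key hbound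
  -- CONCLUSION
  have hT : Tendsto (fun k => ∑ l : Fin m, ∑ i : Fin m, ∑ j ∈ Finset.range (s + 1),
      FMCaux.sD a b j (fun t => Yk k t i l - Y t i l)) atTop (𝓝 0) := by
    have h0 : (0 : ℝ) = ∑ _l : Fin m, ∑ _i : Fin m, ∑ _j ∈ Finset.range (s + 1), (0:ℝ) := by
      simp
    rw [h0]
    refine tendsto_finset_sum _ fun l _ => tendsto_finset_sum _ fun i _ =>
      tendsto_finset_sum _ fun j hjr => ?_
    exact main j (Finset.mem_range_succ_iff.1 hjr) i l
  refine squeeze_zero (fun k => matClNorm_nonneg _ _ _ _) (fun k => ?_) hT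
  refine ciSup_le fun l => ?_
  have hveq : ∀ l' : Fin m, vecClNorm s a b (fun t i => (Yk k t - Y t) i l')
      = ∑ i : Fin m, ∑ j ∈ Finset.range (s + 1),
        FMCaux.sD a b j (fun t => Yk k t i l' - Y t i l') := by
    intro l'
    rfl
  refine le_trans (Finset.single_le_sum
    (f := fun l' => vecClNorm s a b fun t i => (Yk k t - Y t) i l')
    (fun l' _ => vecClNorm_nonneg _ _ _ _) (Finset.mem_univ l)) ?_
  exact le_of_eq (Finset.sum_congr rfl fun l' _ => hveq l')
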